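/- With the seven matrices t₁, …, t₇ and the componentwise partial order ≤ as defined, every infinite nondecreasing sequence σ₁ ≤ σ₂ ≤ ⋯ of elements of {t₂, t₃, t₄, t₅, t₆, t₇} is, for some i, j, k ∈ ω, of exactly one of the following forms: t₂^∞; t₂^i t₃^∞; t₂^i t₃^j t₄^∞; t₂^i t₃^j t₄^k t₇^∞; t₂^i t₅^∞; t₂^i t₅^j t₆^∞; t₂^i t₅^j t₆^k t₇^∞ (where T^m denotes m consecutive repetitions of T and T^∞ denotes infinite repetition). Conversely, every sequence of one of these forms is nondecreasing. -/

import Mathlib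

inductive Typ where
  | A | B | C | D | E
deriving DecidableEq

/-- Position in the linear order α ≺ β ≺ γ ≺ δ ≺ ε. -/
def Typ.ord : Typ → ℕ
  | .A => 0
  | .B => 1
  | .C => 2
  | .D => 3
  | .E => 4

open Typ in
def t2 : Fin 3 → Fin 3 → Typ := ![![C, E, E], ![A, A, A], ![A, A, A]]
open Typ in
def t3 : Fin 3 → Fin 3 → Typ := ![![C, E, E], ![B, C, E], ![A, A, A]]
open Typ in
def t4 : Fin 3 → Fin 3 → Typ := ![![C, E, E], ![C, C, E], ![A, A, A]]
open Typ in
def t5 : Fin 3 → Fin 3 → Typ := ![![C, E, E], ![C, C, C], ![C, C, C]]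
open Typ in
def t6 : Fin 3 → Fin 3 → Typ := ![![C, E, E], ![C, C, D], ![C, C, C]]
open Typ in
def t7 : Fin 3 → Fin 3 → Typ := ![![C, E, E], ![C, C, E], ![C, C, C]]

/-- Componentwise order of matrices over {α, β, γ, δ, ε}. -/
def matLe (M N : Fin 3 → Fin 3 → Typ) : Prop :=
  ∀ i j : Fin 3, (M i j).ord ≤ (N i j).ord

/-- The sequence `a^i b^j c^k d^∞`: `i` copies of `a`, then `j` copies of `b`,
then `k` copies of `c`, then `d` forever. -/
def stepSeq (a b c d : Fin 3 → Fin 3 → Typ) (i j k : ℕ) : ℕ → (Fin 3 → Fin 3 → Typ) :=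
  fun n => if n < i then a else if n < i + j then b else if n < i + j + k then c else d

/-- The forms `t₂^∞`, `t₂^i t₃^∞`, `t₂^i t₃^j t₄^∞`, `t₂^i t₃^j t₄^k t₇^∞`,
`t₂^i t₅^∞`, `t₂^i t₅^j t₆^∞`, `t₂^i t₅^j t₆^k t₇^∞`. -/
def isDeltaForm (σ : ℕ → (Fin 3 → Fin 3 → Typ)) : Prop :=
  (∀ n, σ n = t2) ∨
  (∃ i, σ = stepSeq t2 t3 t3 t3 i 0 0) ∨
  (∃ i j, σ = stepSeq t2 t3 t4 t4 i j 0) ∨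
  (∃ i j k, σ = stepSeq t2 t3 t4 t7 i j k) ∨
  (∃ i, σ = stepSeq t2 t5 t5 t5 i 0 0) ∨
  (∃ i j, σ = stepSeq t2 t5 t6 t6 i j 0) ∨
  (∃ i j k, σ = stepSeq t2 t5 t6 t7 i j k)

/-!
On `{t₂, …, t₇}` the componentwise order consists of the two chains `t₂ < t₃ < t₄ < t₇` and
`t₂ < t₅ < t₆ < t₇`, and each of `t₃, t₄` is incomparable with each of `t₅, t₆`. The values of a
nondecreasing sequence are pairwise comparable, so they lie in one of the two chains. A
nondecreasing sequence in a chain `a ≤ b ≤ c ≤ d` is determined by the first times it reaches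
`b`, `c` and `d`, which are the block boundaries of the forms `a^i b^j c^k d^∞`; the degenerate
forms arise when `d`, `c` or `b` is never reached.
-/

/-- The order `α ≺ β ≺ γ ≺ δ ≺ ε`; with it `matLe M N` is, by definition, the pointwise
order `M ≤ N`. -/
instance : LinearOrder Typ :=
  LinearOrder.lift' Typ.ord fun x y h => by cases x <;> cases y <;> first | rfl | cases h

instance (M N : Fin 3 → Fin 3 → Typ) : Decidable (M ≤ N) :=
  inferInstanceAs (Decidable (∀ i j, M i j ≤ N i j))

theorem Monotone.exists_le_apply_iff {α : Type*} [Preorder α] {σ : ℕ → α} (hσ : Monotone σ)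
    {x : α} (hx : ∃ n, x ≤ σ n) : ∃ m, ∀ n, x ≤ σ n ↔ m ≤ n := by
  classical
  exact ⟨Nat.find hx, fun n => ⟨Nat.find_min' hx, fun h => (Nat.find_spec hx).trans (hσ h)⟩⟩

theorem eq_ite_of_mem_chain {α : Type*} [PartialOrder α] [DecidableLE α] {a b c d x : α}
    (hab : a ≤ b) (hbc : b ≤ c) (hcd : c ≤ d) (hx : x ∈ [a, b, c, d]) :
    x = if b ≤ x then if c ≤ x then if d ≤ x then d else c else b else a := by
  simp only [List.mem_cons, List.not_mem_nil, or_false] at hx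
  rcases hx with rfl | rfl | rfl | rfl <;> split_ifs <;> order

section StepSeq

variable {a b c d : Fin 3 → Fin 3 → Typ}

theorem eq_stepSeq_of_monotone {σ : ℕ → (Fin 3 → Fin 3 → Typ)} (hσ : Monotone σ)
    (hab : a ≤ b) (hbc : b ≤ c) (hcd : c ≤ d) (hmem : ∀ n, σ n ∈ [a, b, c, d])
    (hd : ∃ n, σ n = d) : ∃ i j k, σ = stepSeq a b c d i j k := by
  obtain ⟨N, hN⟩ := hd
  obtain ⟨m₁, h₁⟩ := hσ.exists_le_apply_iff ⟨N, hN ▸ hbc.trans hcd⟩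
  obtain ⟨m₂, h₂⟩ := hσ.exists_le_apply_iff ⟨N, hN ▸ hcd⟩
  obtain ⟨m₃, h₃⟩ := hσ.exists_le_apply_iff ⟨N, hN.ge⟩
  have h₁₂ : m₁ ≤ m₂ := (h₁ m₂).1 (hbc.trans ((h₂ m₂).2 le_rfl))
  have h₂₃ : m₂ ≤ m₃ := (h₂ m₃).1 (hcd.trans ((h₃ m₃).2 le_rfl))
  refine ⟨m₁, m₂ - m₁, m₃ - m₂, funext fun n => ?_⟩
  rw [eq_ite_of_mem_chain hab hbc hcd (hmem n)]
  simp only [h₁, h₂, h₃, stepSeq]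
  split_ifs <;> first | rfl | omega

theorem stepSeq_same_last_two {i j k : ℕ} :
    stepSeq a b c c i j k = stepSeq a b c c i j 0 := by
  funext n
  simp only [stepSeq]
  split_ifs <;> rfl

theorem stepSeq_same_last_three {i j k : ℕ} :
    stepSeq a b b b i j k = stepSeq a b b b i 0 0 := by
  funext n
  simp only [stepSeq]
  split_ifs <;> rfl

theorem monotone_chain_cases {σ : ℕ → (Fin 3 → Fin 3 → Typ)} (hσ : Monotone σ)
    (hab : a ≤ b) (hbc : b ≤ c) (hcd : c ≤ d) (hmem : ∀ n, σ n ∈ [a, b, c, d]) :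
    (∀ n, σ n = a) ∨ (∃ i, σ = stepSeq a b b b i 0 0) ∨ (∃ i j, σ = stepSeq a b c c i j 0) ∨
      ∃ i j k, σ = stepSeq a b c d i j k := by
  by_cases hd : ∃ n, σ n = d
  · exact .inr <| .inr <| .inr <| eq_stepSeq_of_monotone hσ hab hbc hcd hmem hd
  have hmem_c : ∀ n, σ n ∈ [a, b, c, c] := fun n => by
    have := hmem n; simp_all
  by_cases hc : ∃ n, σ n = c
  · obtain ⟨i, j, k, h⟩ := eq_stepSeq_of_monotone hσ hab hbc le_rfl hmem_c hc
    exact .inr <| .inr <| .inl ⟨i, j, h.trans stepSeq_same_last_two⟩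
  have hmem_b : ∀ n, σ n ∈ [a, b, b, b] := fun n => by
    have := hmem_c n; simp_all
  by_cases hb : ∃ n, σ n = b
  · obtain ⟨i, j, k, h⟩ := eq_stepSeq_of_monotone hσ hab le_rfl le_rfl hmem_b hb
    exact .inr <| .inl ⟨i, h.trans stepSeq_same_last_three⟩
  exact .inl fun n => by have := hmem_b n; simp_all

theorem stepSeq_mem {l : List (Fin 3 → Fin 3 → Typ)} (ha : a ∈ l) (hb : b ∈ l) (hc : c ∈ l)
    (hd : d ∈ l) (i j k n : ℕ) : stepSeq a b c d i j k n ∈ l := by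
  unfold stepSeq
  split_ifs <;> assumption

theorem stepSeq_monotone (hab : a ≤ b) (hbc : b ≤ c) (hcd : c ≤ d) (i j k : ℕ) :
    Monotone (stepSeq a b c d i j k) := by
  refine monotone_nat_of_le_succ fun n => ?_
  unfold stepSeq
  split_ifs <;> first | omega | order

end StepSeq

theorem mem_t2_t3_t4_t7_of_comparable :
    ∀ x ∈ [t2, t3, t4, t5, t6, t7], ∀ y ∈ [t3, t4], x ≤ y ∨ y ≤ x → x ∈ [t2, t3, t4, t7] := by
  decide

theorem Monotone.mem_maximal_chains {σ : ℕ → (Fin 3 → Fin 3 → Typ)} (hσ : Monotone σ)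
    (hmem : ∀ n, σ n ∈ [t2, t3, t4, t5, t6, t7]) :
    (∀ n, σ n ∈ [t2, t3, t4, t7]) ∨ (∀ n, σ n ∈ [t2, t5, t6, t7]) := by
  by_cases h : ∃ m, σ m ∈ [t3, t4]
  · obtain ⟨m, hm⟩ := h
    exact .inl fun n => mem_t2_t3_t4_t7_of_comparable _ (hmem n) _ hm
      ((le_total n m).imp (hσ ·) (hσ ·))
  · push Not at h
    refine .inr fun n => ?_
    have := hmem n; have := h n; simp_all

theorem isDeltaForm_of_monotone {σ : ℕ → (Fin 3 → Fin 3 → Typ)} (hσ : Monotone σ)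
    (hmem : ∀ n, σ n ∈ [t2, t3, t4, t5, t6, t7]) : isDeltaForm σ := by
  unfold isDeltaForm
  rcases hσ.mem_maximal_chains hmem with h | h
  · obtain h | h | h | h := monotone_chain_cases hσ (by decide) (by decide) (by decide) h
    exacts [.inl h, .inr <| .inl h, .inr <| .inr <| .inl h, .inr <| .inr <| .inr <| .inl h]
  · obtain h | h | h | h := monotone_chain_cases hσ (by decide) (by decide) (by decide) h
    exacts [.inl h, .inr <| .inr <| .inr <| .inr <| .inl h,
      .inr <| .inr <| .inr <| .inr <| .inr <| .inl h, .inr <| .inr <| .inr <| .inr <| .inr <| .inr h]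

theorem isDeltaForm.mem_and_monotone {σ : ℕ → (Fin 3 → Fin 3 → Typ)} (hσ : isDeltaForm σ) :
    (∀ n, σ n ∈ [t2, t3, t4, t5, t6, t7]) ∧ Monotone σ := by
  rcases hσ with h | ⟨i, rfl⟩ | ⟨i, j, rfl⟩ | ⟨i, j, k, rfl⟩ | ⟨i, rfl⟩ | ⟨i, j, rfl⟩ | ⟨i, j, k, rfl⟩
  · exact ⟨fun n => by simp [h], fun m n _ => by simp [h]⟩
  all_goals exact ⟨stepSeq_mem (by decide) (by decide) (by decide) (by decide) _ _ _,
    stepSeq_monotone (by decide) (by decide) (by decide) _ _ _⟩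

/-- An infinite nondecreasing sequence over `{t₂, …, t₇}` is of one of the
seven forms listed in `isDeltaForm`, and conversely every sequence of one of
these forms is nondecreasing (with values in `{t₂, …, t₇}`). -/
theorem stmt16 :
    (∀ σ : ℕ → (Fin 3 → Fin 3 → Typ),
      (∀ n, σ n ∈ [t2, t3, t4, t5, t6, t7]) →
      (∀ n, matLe (σ n) (σ (n + 1))) →
      isDeltaForm σ) ∧
    (∀ σ : ℕ → (Fin 3 → Fin 3 → Typ), isDeltaForm σ →
      (∀ n, σ n ∈ [t2, t3, t4, t5, t6, t7]) ∧ (∀ n, matLe (σ n) (σ (n + 1)))) :=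
  ⟨fun _ hmem hle => isDeltaForm_of_monotone (monotone_nat_of_le_succ hle) hmem,
    fun _ hσ => hσ.mem_and_monotone.imp_right fun h n => h n.le_succ⟩
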